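/- arXiv:2605.20897 — 8 statements merged into one kernel-verified Lean document; each statement's English description precedes it below -/
import Mathlib

section
/- Let p ≥ 2 be an integer and let α₁, …, α_t ∈ {1, …, p} for some t ≥ 1. Let s = (∑_{i=1}^t α_i) mod p. Then ∑_{i=1}^t α_i (p − α_i) ≥ s (p − s). -/
lemma key (p a b : ℕ) (hp : 0 < p) (ha : a ≤ p) (hb : b ≤ p) :
    ((a + b) % p) * (p - (a + b) % p) ≤ a * (p - a) + b * (p - b) := by
  have hc : (a + b) % p < p := Nat.mod_lt _ hp
  have hdm := Nat.div_add_mod (a + b) p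
  set c := (a + b) % p with hcdef
  set q := (a + b) / p with hqdef
  have hq2 : q ≤ 2 := by
    have : a + b ≤ 2 * p := by omega
    rw [hqdef]
    exact Nat.div_le_of_le_mul (by omega)
  interval_cases q
  · have : a + b = c := by omega
    zify [ha, hb, hc.le]
    nlinarith [this]
  · have h1 : a + b = p + c := by omega
    zify [ha, hb, hc.le]
    have h1' : (a : ℤ) + b = p + c := by exact_mod_cast h1
    nlinarith [h1']
  · have h1 : a + b = 2 * p + c := by omega
    have : a = p ∧ b = p ∧ c = 0 := by omega
    obtain ⟨rfl, rfl, hc0⟩ := this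
    simp [hc0]

lemma key_list (p : ℕ) (hp : 0 < p) (l : List ℕ) (h : ∀ x ∈ l, x ≤ p) :
    (l.sum % p) * (p - l.sum % p) ≤ (l.map (fun a => a * (p - a))).sum := by
  induction l with
  | nil => simp [Nat.zero_mod]
  | cons a l ih =>
    have ha : a ≤ p := h a (by simp)
    have ih' := ih (fun x hx => h x (by simp [hx]))
    have hmod : (a + l.sum) % p = (a + l.sum % p) % p := by
      exact (Nat.add_mod_mod a l.sum p).symm
    have hm : l.sum % p ≤ p := (Nat.mod_lt _ hp).le
    calc ((a :: l).sum % p) * (p - (a :: l).sum % p)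
        = ((a + l.sum % p) % p) * (p - (a + l.sum % p) % p) := by
          rw [List.sum_cons, hmod]
      _ ≤ a * (p - a) + (l.sum % p) * (p - l.sum % p) := key p a _ hp ha hm
      _ ≤ a * (p - a) + (l.map (fun a => a * (p - a))).sum := by omega
      _ = ((a :: l).map (fun a => a * (p - a))).sum := by simp

theorem stmt0 (p t : ℕ) (hp : 2 ≤ p) (ht : 1 ≤ t)
    (α : Fin t → ℕ) (hα : ∀ i, 1 ≤ α i ∧ α i ≤ p) :
    ((∑ i, α i) % p) * (p - (∑ i, α i) % p) ≤ ∑ i, α i * (p - α i) := by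
  have h1 : (∑ i, α i) = (List.ofFn α).sum := by
    rw [List.sum_ofFn]
  have h2 : (∑ i, α i * (p - α i)) = ((List.ofFn α).map (fun a => a * (p - a))).sum := by
    rw [List.map_ofFn, List.sum_ofFn]
    rfl
  rw [h1, h2]
  apply key_list p (by omega)
  intro x hx
  rw [List.mem_ofFn] at hx
  obtain ⟨i, rfl⟩ := hx
  exact (hα i).2
end

section
/- Let a₁ and a₂ be integers in {1, …, p} with p ≥ 2, and let s₁ = (a₁ + a₂) mod p. Then a₁(p − a₁) + a₂(p − a₂) ≥ s₁(p − s₁). -/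
theorem stmt1 (p a₁ a₂ : ℕ) (hp : 2 ≤ p)
    (h₁ : 1 ≤ a₁) (h₁' : a₁ ≤ p) (h₂ : 1 ≤ a₂) (h₂' : a₂ ≤ p) :
    ((a₁ + a₂) % p) * (p - (a₁ + a₂) % p) ≤ a₁ * (p - a₁) + a₂ * (p - a₂) := by
  rcases lt_or_ge (a₁ + a₂) p with h | h
  · rw [Nat.mod_eq_of_lt h]
    zify [h₁', h₂', h.le]
    nlinarith [mul_nonneg (Int.ofNat_nonneg a₁) (Int.ofNat_nonneg a₂)]
  · rcases lt_or_ge (a₁ + a₂) (2 * p) with h2 | h2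
    · have hm : (a₁ + a₂) % p = a₁ + a₂ - p := by
        rw [Nat.mod_eq_sub_mod h, Nat.mod_eq_of_lt (by omega)]
      rw [hm]
      have hle : a₁ + a₂ - p ≤ p := by omega
      zify [h₁', h₂', hle, h]
      nlinarith [mul_nonneg (sub_nonneg.2 (by exact_mod_cast h₁' : (a₁:ℤ) ≤ p)) (sub_nonneg.2 (by exact_mod_cast h₂' : (a₂:ℤ) ≤ p))]
    · have ha1 : a₁ = p := by omega
      have ha2 : a₂ = p := by omega
      subst ha1 ha2
      simp
end

section
/- Let n, p, t be positive integers and x₁, …, x_t positive integers with n = x₁ + ⋯ + x_t. Let b, b₁, …, b_t be non-negative integers each strictly less than p, with b ≤ n, b_i ≤ x_i for all i, and b ≡ b₁ + ⋯ + b_t (mod p). Let q_i = (p − b_i) mod p and A = ∑_{i<j} x_i x_j + ∑_{i=1}^t (x_i − b_i) q_i. If b ≤ p/2 then A ≥ b(n − b). -/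
open Finset

private lemma sum_sq_decomp' {t : ℕ} (f : Fin t → Fin t → ℤ) :
    ∑ i, ∑ j, f i j
      = (∑ i, f i i) + ∑ i, ∑ j, (if i < j then f i j + f j i else 0) := by
  have h1 : ∀ i j : Fin t, f i j
      = (if i = j then f j j else 0) + ((if i < j then f i j else 0)
        + (if j < i then f i j else 0)) := by
    intro i j
    rcases lt_trichotomy i j with h | h | h
    · rw [if_pos h, if_neg (ne_of_lt h), if_neg (asymm h)]; ring
    · subst h; simp
    · rw [if_neg (asymm h), if_neg (ne_of_gt h), if_pos h]; ring
  calc ∑ i, ∑ j, f i j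
      = ∑ i : Fin t, ((∑ j, if i = j then f j j else 0)
          + ((∑ j, if i < j then f i j else 0) + ∑ j, if j < i then f i j else 0)) := by
        refine sum_congr rfl fun i _ => ?_
        rw [← sum_add_distrib, ← sum_add_distrib]
        exact sum_congr rfl fun j _ => h1 i j
    _ = (∑ i, f i i) + ((∑ i, ∑ j, if i < j then f i j else 0)
          + ∑ i, ∑ j, (if j < i then f i j else 0)) := by
        rw [sum_add_distrib, sum_add_distrib]
        congr 1
        refine sum_congr rfl fun i _ => ?_
        simp [Finset.sum_ite_eq]
    _ = (∑ i, f i i) + ((∑ i, ∑ j, if i < j then f i j else 0)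
          + ∑ i, ∑ j, (if i < j then f j i else 0)) := by
        rw [Finset.sum_comm (f := fun i j => if j < i then f i j else 0)]
    _ = (∑ i, f i i) + ∑ i, ∑ j, (if i < j then f i j + f j i else 0) := by
        congr 1
        rw [← sum_add_distrib]
        refine sum_congr rfl fun i _ => ?_
        rw [← sum_add_distrib]
        exact sum_congr rfl fun j _ => (ite_add_ite _ _ _ _ _).trans (by simp)

private def greedyC (b : ℕ) (B : ℕ → ℕ) (j : ℕ) : ℕ :=
  min b (∑ l ∈ Finset.range (j + 1), B l) - min b (∑ l ∈ Finset.range j, B l)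

private lemma greedy_eq (b : ℕ) (B : ℕ → ℕ) (j : ℕ) :
    greedyC b B j = min (B j) (b - ∑ l ∈ Finset.range j, B l) := by
  unfold greedyC
  rw [Finset.sum_range_succ]
  omega

private lemma greedy_le (b : ℕ) (B : ℕ → ℕ) (j : ℕ) : greedyC b B j ≤ B j := by
  rw [greedy_eq]; omega

private lemma greedy_sum (b : ℕ) (B : ℕ → ℕ) (m : ℕ) :
    ∑ j ∈ Finset.range m, greedyC b B j = min b (∑ l ∈ Finset.range m, B l) := by
  induction m with
  | zero => simp
  | succ m ih =>
    rw [Finset.sum_range_succ, ih]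
    have h2 : (∑ l ∈ Finset.range m, B l) ≤ ∑ l ∈ Finset.range (m + 1), B l := by
      rw [Finset.sum_range_succ]; omega
    unfold greedyC
    omega

set_option maxHeartbeats 1000000 in
theorem stmt2 (n p t : ℕ) (hn : 0 < n) (hp : 0 < p) (ht : 0 < t)
    (x : Fin t → ℕ) (hx : ∀ i, 0 < x i) (hsum : n = ∑ i, x i)
    (b : ℕ) (bb : Fin t → ℕ) (hb : b < p) (hbi : ∀ i, bb i < p)
    (hbn : b ≤ n) (hbx : ∀ i, bb i ≤ x i)
    (hmod : b ≡ (∑ i, bb i) [MOD p])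
    (q : Fin t → ℕ) (hq : ∀ i, q i = (p - bb i) % p)
    (A : ℕ)
    (hA : A = (∑ i, ∑ j, if i < j then x i * x j else 0) + ∑ i, (x i - bb i) * q i)
    (hhalf : 2 * b ≤ p) :
    b * (n - b) ≤ A := by
  classical
  -- setup
  set S := ∑ i, bb i with hS
  have hSmod : S % p = b := by
    have h1 : b % p = S % p := hmod
    rw [Nat.mod_eq_of_lt hb] at h1
    omega
  have hbS : b ≤ S := by
    have := Nat.mod_le S p
    omega
  set K := S - b with hK
  have hdvdK : p ∣ K := (Nat.modEq_iff_dvd' hbS).mp hmod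
  have hKcase : K = 0 ∨ p ≤ K := by
    rcases hdvdK with ⟨k, hk⟩
    rcases Nat.eq_zero_or_pos k with h | h
    · left; rw [hk, h, Nat.mul_zero]
    · right; rw [hk]; exact Nat.le_mul_of_pos_right p h
  -- the greedy decomposition
  set B : ℕ → ℕ := fun j => if h : j < t then bb ⟨j, h⟩ else 0 with hB
  have hBval : ∀ i : Fin t, B (i : ℕ) = bb i := by
    intro i; simp [hB]
  set c : Fin t → ℕ := fun i => greedyC b B (i : ℕ) with hc
  have hcb : ∀ i, c i ≤ bb i := by
    intro i; rw [hc, ← hBval i]; exact greedy_le b B _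
  have hrange : ∑ l ∈ Finset.range t, B l = S := by
    rw [hS, ← Fin.sum_univ_eq_sum_range]
    exact sum_congr rfl fun i _ => hBval i
  have hcsum : ∑ i, c i = b := by
    rw [hc, Fin.sum_univ_eq_sum_range (fun j => greedyC b B j) t, greedy_sum, hrange]
    omega
  set d : Fin t → ℕ := fun i => bb i - c i with hd
  have hdsum : ∑ i, d i = K := by
    have h1 : ∑ i, (bb i - c i) = ∑ i, bb i - ∑ i, c i :=
      Finset.sum_tsub_distrib univ fun i _ => hcb i
    rw [hd]
    simp only [← hS] at h1 ⊢
    omega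
  -- key1
  have hqval : ∀ i, q i = if bb i = 0 then 0 else p - bb i := by
    intro i
    rw [hq]
    rcases Nat.eq_zero_or_pos (bb i) with h | h
    · simp [h, Nat.mod_self]
    · rw [if_neg (by omega), Nat.mod_eq_of_lt (by have := hbi i; omega)]
  have key1 : ∀ i, bb i ≤ q i + K := by
    intro i
    have hble : bb i ≤ S := by
      rw [hS]
      exact Finset.single_le_sum (f := bb) (fun j _ => Nat.zero_le _) (Finset.mem_univ i)
    have := hbi i
    rw [hqval]
    rcases hKcase with h | h <;> split_ifs <;> omega
  -- key2 : greedy structure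
  have key2 : ∀ i : Fin t, d i ≠ 0 → c i ≤ ∑ j, if i < j then d j else 0 := by
    intro i hdi
    rcases Nat.eq_zero_or_pos (c i) with hci | hci
    · rw [hci]; exact Nat.zero_le _
    set P := ∑ l ∈ Finset.range (i : ℕ), B l with hP
    have hceq : c i = min (bb i) (b - P) := by
      rw [hc]
      show greedyC b B (i : ℕ) = _
      rw [greedy_eq, ← hBval i, hP]
    have hdieq : d i = bb i - c i := by rw [hd]
    have hPd : P < b ∧ b < P + bb i := by
      rw [hdieq, hceq] at hdi
      rw [hceq] at hci
      constructor <;> omega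
    have hcval : c i = b - P := by rw [hceq]; omega
    -- after i, the greedy is exhausted
    have hafter : ∀ j : Fin t, i < j → c j = 0 := by
      intro j hij
      have h1 : (i : ℕ) + 1 ≤ (j : ℕ) := hij
      have hPj : P + bb i ≤ ∑ l ∈ Finset.range (j : ℕ), B l := by
        calc P + bb i = ∑ l ∈ Finset.range ((i : ℕ) + 1), B l := by
              rw [Finset.sum_range_succ, hBval, hP]
          _ ≤ ∑ l ∈ Finset.range (j : ℕ), B l :=
              Finset.sum_le_sum_of_subset (Finset.range_subset_range.mpr h1)
      rw [hc]
      show greedyC b B (j : ℕ) = 0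
      rw [greedy_eq]
      omega
    have hdafter : ∀ j : Fin t, i < j → d j = bb j := by
      intro j hij; rw [hd]; simp only [hafter j hij, Nat.sub_zero]
    -- bridge : P equals the Fin-sum of earlier bb's
    have hbridge : P = ∑ j : Fin t, if j < i then bb j else 0 := by
      have h1 : ∑ j : Fin t, (if j < i then bb j else 0)
          = ∑ l ∈ Finset.range t, (if l < (i : ℕ) then B l else 0) := by
        rw [← Fin.sum_univ_eq_sum_range (fun l => if l < (i : ℕ) then B l else 0) t]
        refine sum_congr rfl fun j _ => ?_
        simp only [hBval j, Fin.lt_def]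
      rw [h1, hP]
      rw [← Finset.sum_subset (Finset.range_subset_range.mpr i.isLt.le)
        (fun l _ hl => by rw [Finset.mem_range] at hl; rw [if_neg (by omega)])]
      exact (sum_congr rfl fun l hl => by
        rw [Finset.mem_range] at hl; rw [if_pos hl]).symm
    -- split S
    have hsplit : P + bb i + (∑ j, if i < j then bb j else 0) = S := by
      rw [hbridge, hS]
      have hpt : ∀ j : Fin t, bb j
          = (if j = i then bb i else 0) + ((if j < i then bb j else 0)
            + (if i < j then bb j else 0)) := by
        intro j
        rcases lt_trichotomy j i with h | h | h
        · rw [if_pos h, if_neg (ne_of_lt h), if_neg (asymm h)]; omega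
        · subst h; simp
        · rw [if_neg (asymm h), if_neg (ne_of_gt h), if_pos h]; omega
      calc (∑ j : Fin t, if j < i then bb j else 0) + bb i
            + (∑ j : Fin t, if i < j then bb j else 0)
          = (∑ j : Fin t, if j = i then bb i else 0)
            + ((∑ j : Fin t, if j < i then bb j else 0)
              + (∑ j : Fin t, if i < j then bb j else 0)) := by
            rw [Finset.sum_ite_eq' univ i (fun _ => bb i), if_pos (mem_univ i)]
            ring
        _ = ∑ j, bb j := by
            rw [← sum_add_distrib, ← sum_add_distrib]
            exact (sum_congr rfl fun j _ => hpt j).symm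
    have hdR : (∑ j, if i < j then d j else 0) = ∑ j, if i < j then bb j else 0 := by
      refine sum_congr rfl fun j _ => ?_
      split_ifs with h
      · exact hdafter j h
      · rfl
    have hKpos : p ≤ K := by
      have h1 : d i ≤ ∑ j, d j :=
        Finset.single_le_sum (f := d) (fun j _ => Nat.zero_le _) (Finset.mem_univ i)
      rw [hdsum] at h1
      rcases hKcase with h | h
      · omega
      · exact h
    have hbbiS : b + bb i ≤ S := by
      have := hbi i
      omega
    rw [hdR, hcval]
    omega
  -- Move to ℤ
  have zCsum : ∑ i, (c i : ℤ) = (b : ℤ) := by exact_mod_cast hcsum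
  have zDsum : ∑ i, (d i : ℤ) = (K : ℤ) := by exact_mod_cast hdsum
  have zd : ∀ i, (d i : ℤ) = (bb i : ℤ) - (c i : ℤ) := by
    intro i
    rw [hd]
    push_cast [hcb i]
    ring
  have zkey1 : ∀ i, (bb i : ℤ) ≤ (q i : ℤ) + (K : ℤ) := by
    intro i; exact_mod_cast key1 i
  have zkey2 : ∀ i, (d i : ℤ) ≠ 0 →
      (c i : ℤ) ≤ ∑ j, if i < j then (d j : ℤ) else 0 := by
    intro i h
    have h1 := key2 i (by exact_mod_cast h)
    calc (c i : ℤ) ≤ ((∑ j, if i < j then d j else 0 : ℕ) : ℤ) := by exact_mod_cast h1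
      _ = ∑ j, if i < j then (d j : ℤ) else 0 := by
          rw [Nat.cast_sum]
          exact sum_congr rfl fun j _ => by split_ifs <;> simp
  have hszn : ∀ i, (0 : ℤ) ≤ (x i : ℤ) - (bb i : ℤ) := by
    intro i; have := hbx i; omega
  -- forget the definitions to keep defeq cheap
  clear_value S K B c d
  clear hS hK hB hc hd hmod hSmod hbS hdvdK hKcase hBval hcb hrange hcsum hdsum hqval key1 key2
  -- main integer inequality
  have main : (b : ℤ) * ((n : ℤ) - b)
      ≤ (∑ i, ∑ j, if i < j then (x i : ℤ) * (x j : ℤ) else 0)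
        + ∑ i, ((x i : ℤ) - (bb i : ℤ)) * (q i : ℤ) := by
    have hxn : ∑ i, (x i : ℤ) = (n : ℤ) := by rw [hsum]; push_cast; rfl
    have e0 : (b : ℤ) * ((n : ℤ) - b)
        = (∑ i, (c i : ℤ)) * (∑ i, ((x i : ℤ) - (c i : ℤ))) := by
      rw [zCsum, Finset.sum_sub_distrib, hxn, zCsum]
    have e1 : (∑ i, (c i : ℤ)) * (∑ i, ((x i : ℤ) - (c i : ℤ)))
        = ∑ i, ∑ j, (c i : ℤ) * ((x j : ℤ) - (c j : ℤ)) :=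
      Finset.sum_mul_sum _ _ _ _
    have e2 : ∑ i, ∑ j, (c i : ℤ) * ((x j : ℤ) - (c j : ℤ))
        = (∑ i, (c i : ℤ) * ((x i : ℤ) - (c i : ℤ)))
          + ∑ i, ∑ j, (if i < j then (c i : ℤ) * ((x j : ℤ) - (c j : ℤ))
              + (c j : ℤ) * ((x i : ℤ) - (c i : ℤ)) else 0) :=
      sum_sq_decomp' _
    have e3 : (∑ i, ∑ j, if i < j then (x i : ℤ) * (x j : ℤ) else 0)
        = (∑ i, ∑ j, if i < j then ((x i : ℤ) - c i) * ((x j : ℤ) - c j) else 0)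
          + (∑ i, ∑ j, if i < j then (c i : ℤ) * (c j : ℤ) else 0)
          + ∑ i, ∑ j, (if i < j then (c i : ℤ) * ((x j : ℤ) - (c j : ℤ))
              + (c j : ℤ) * ((x i : ℤ) - (c i : ℤ)) else 0) := by
      have hpt : ∀ i j : Fin t, (if i < j then (x i : ℤ) * (x j : ℤ) else 0)
          = (if i < j then ((x i : ℤ) - c i) * ((x j : ℤ) - c j) else 0)
            + (if i < j then (c i : ℤ) * (c j : ℤ) else 0)
            + (if i < j then (c i : ℤ) * ((x j : ℤ) - (c j : ℤ))
                + (c j : ℤ) * ((x i : ℤ) - (c i : ℤ)) else 0) := by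
        intro i j; split_ifs <;> ring
      calc (∑ i, ∑ j, if i < j then (x i : ℤ) * (x j : ℤ) else 0)
          = ∑ i, ∑ j, ((if i < j then ((x i : ℤ) - c i) * ((x j : ℤ) - c j) else 0)
            + (if i < j then (c i : ℤ) * (c j : ℤ) else 0)
            + (if i < j then (c i : ℤ) * ((x j : ℤ) - (c j : ℤ))
                + (c j : ℤ) * ((x i : ℤ) - (c i : ℤ)) else 0)) :=
            sum_congr rfl fun i _ => sum_congr rfl fun j _ => hpt i j
        _ = _ := by simp only [Finset.sum_add_distrib]
    -- decomposition of the c∙y diagonal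
    have a1 : ∑ i, (c i : ℤ) * ((x i : ℤ) - (c i : ℤ))
        = (∑ i, (c i : ℤ) * ((x i : ℤ) - (bb i : ℤ)))
          + ∑ i, (c i : ℤ) * (d i : ℤ) := by
      rw [← sum_add_distrib]
      refine sum_congr rfl fun i _ => ?_
      rw [zd i]; ring
    have a2 : (∑ i, (c i : ℤ) * ((x i : ℤ) - (bb i : ℤ)))
        ≤ ∑ i, ((x i : ℤ) - (bb i : ℤ)) * ((q i : ℤ) + (K : ℤ) - (d i : ℤ)) := by
      refine sum_le_sum fun i _ => ?_
      have h2 : (c i : ℤ) ≤ (q i : ℤ) + (K : ℤ) - (d i : ℤ) := by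
        have := zkey1 i; have := zd i; linarith
      calc (c i : ℤ) * ((x i : ℤ) - (bb i : ℤ))
          = ((x i : ℤ) - (bb i : ℤ)) * (c i : ℤ) := by ring
        _ ≤ _ := mul_le_mul_of_nonneg_left h2 (hszn i)
    have a3 : ∑ i, (c i : ℤ) * (d i : ℤ)
        ≤ ∑ i, (d i : ℤ) * (∑ j, if i < j then (d j : ℤ) else 0) := by
      refine sum_le_sum fun i _ => ?_
      rcases eq_or_ne (d i) 0 with h | h
      · simp [h]
      · have h2 := zkey2 i (by exact_mod_cast h)
        have h3 : (0 : ℤ) ≤ (d i : ℤ) := Int.natCast_nonneg _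
        calc (c i : ℤ) * (d i : ℤ) = (d i : ℤ) * (c i : ℤ) := by ring
          _ ≤ _ := mul_le_mul_of_nonneg_left h2 h3
    have a4 : ∑ i, (d i : ℤ) * (∑ j, if i < j then (d j : ℤ) else 0)
        = ∑ i, ∑ j, (if i < j then (d i : ℤ) * (d j : ℤ) else 0) := by
      refine sum_congr rfl fun i _ => ?_
      rw [Finset.mul_sum]
      exact sum_congr rfl fun j _ => by split_ifs <;> simp
    -- rewrite the (s,(q+K-d)) sum
    have e4 : ∑ i, ∑ j, ((x i : ℤ) - (bb i : ℤ)) * (d j : ℤ)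
        = (∑ i, ((x i : ℤ) - (bb i : ℤ)) * (d i : ℤ))
          + ∑ i, ∑ j, (if i < j then ((x i : ℤ) - (bb i : ℤ)) * (d j : ℤ)
              + ((x j : ℤ) - (bb j : ℤ)) * (d i : ℤ) else 0) :=
      sum_sq_decomp' _
    have e4' : ∑ i, ∑ j, ((x i : ℤ) - (bb i : ℤ)) * (d j : ℤ)
        = (∑ i, ((x i : ℤ) - (bb i : ℤ))) * (K : ℤ) := by
      rw [← zDsum]
      exact (Finset.sum_mul_sum _ _ _ _).symm
    have a5 : ∑ i, ((x i : ℤ) - (bb i : ℤ)) * ((q i : ℤ) + (K : ℤ) - (d i : ℤ))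
        = (∑ i, ((x i : ℤ) - (bb i : ℤ)) * (q i : ℤ))
          + ∑ i, ∑ j, (if i < j then ((x i : ℤ) - (bb i : ℤ)) * (d j : ℤ)
              + ((x j : ℤ) - (bb j : ℤ)) * (d i : ℤ) else 0) := by
      have eL : ∑ i, ((x i : ℤ) - (bb i : ℤ)) * ((q i : ℤ) + (K : ℤ) - (d i : ℤ))
          = (∑ i, ((x i : ℤ) - (bb i : ℤ)) * (q i : ℤ))
            + ((∑ i, ((x i : ℤ) - (bb i : ℤ))) * (K : ℤ)
              - ∑ i, ((x i : ℤ) - (bb i : ℤ)) * (d i : ℤ)) := by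
        rw [Finset.sum_mul, ← Finset.sum_sub_distrib, ← Finset.sum_add_distrib]
        exact sum_congr rfl fun i _ => by ring
      rw [eL]
      rw [e4'] at e4
      linarith
    -- the two nonnegative comparisons
    have i1 : (∑ i, ∑ j, (if i < j then ((x i : ℤ) - (bb i : ℤ)) * (d j : ℤ)
              + ((x j : ℤ) - (bb j : ℤ)) * (d i : ℤ) else 0))
          + (∑ i, ∑ j, (if i < j then (d i : ℤ) * (d j : ℤ) else 0))
        ≤ ∑ i, ∑ j, (if i < j then ((x i : ℤ) - c i) * ((x j : ℤ) - c j) else 0) := by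
      rw [← sum_add_distrib]
      refine sum_le_sum fun i _ => ?_
      rw [← sum_add_distrib]
      refine sum_le_sum fun j _ => ?_
      rw [ite_add_ite]
      split_ifs with h
      · have hyi : (x i : ℤ) - (c i : ℤ) = ((x i : ℤ) - (bb i : ℤ)) + (d i : ℤ) := by
          rw [zd i]; ring
        have hyj : (x j : ℤ) - (c j : ℤ) = ((x j : ℤ) - (bb j : ℤ)) + (d j : ℤ) := by
          rw [zd j]; ring
        rw [hyi, hyj]
        nlinarith [mul_nonneg (hszn i) (hszn j)]
      · norm_num
    have i2 : (0 : ℤ) ≤ ∑ i, ∑ j, (if i < j then (c i : ℤ) * (c j : ℤ) else 0) := by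
      refine sum_nonneg fun i _ => sum_nonneg fun j _ => ?_
      split_ifs with h
      · positivity
      · exact le_refl 0
    linarith [e0, e1, e2, e3, a1, a2, a3, a4, a5, i1, i2]
  -- conclude, going back to ℕ
  rw [hA]
  have hcast1 : ((∑ i, ∑ j, if i < j then x i * x j else 0 : ℕ) : ℤ)
      = ∑ i, ∑ j, (if i < j then (x i : ℤ) * (x j : ℤ) else 0) := by
    rw [Nat.cast_sum]
    refine sum_congr rfl fun i _ => ?_
    rw [Nat.cast_sum]
    exact sum_congr rfl fun j _ => by split_ifs <;> simp
  have hcast2 : ((∑ i, (x i - bb i) * q i : ℕ) : ℤ)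
      = ∑ i, ((x i : ℤ) - (bb i : ℤ)) * (q i : ℤ) := by
    rw [Nat.cast_sum]
    refine sum_congr rfl fun i _ => ?_
    rw [Nat.cast_mul, Nat.cast_sub (hbx i)]
  have h4 : ((b * (n - b) : ℕ) : ℤ)
      ≤ (((∑ i, ∑ j, if i < j then x i * x j else 0) + ∑ i, (x i - bb i) * q i : ℕ) : ℤ) := by
    rw [Nat.cast_mul, Nat.cast_sub hbn, Nat.cast_add, hcast1, hcast2]
    exact main
  exact_mod_cast h4
end

section
/- Let n, p, t be positive integers and x₁, …, x_t positive integers with n = x₁ + ⋯ + x_t. Let b, b₁, …, b_t be non-negative integers each strictly less than p, with b ≤ n, b_i ≤ x_i for all i, and b ≡ b₁ + ⋯ + b_t (mod p). Let q_i = (p − b_i) mod p and A = ∑_{i<j} x_i x_j + ∑_{i=1}^t (x_i − b_i) q_i. If b > p/2 then A ≥ (p − b)(n − b). -/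
open Finset

lemma pairg (m a c : ℕ) (ha : a ≤ m) (hc : c ≤ m) :
    ((a + c) % m) * (m - (a + c) % m) ≤ a * (m - a) + c * (m - c) := by
  rcases Nat.eq_zero_or_pos m with hm | hm
  · obtain rfl : a = 0 := by omega
    obtain rfl : c = 0 := by omega
    simp
  by_cases h1 : a + c < m
  · rw [Nat.mod_eq_of_lt h1]
    zify [ha, hc, h1.le]
    nlinarith
  · push_neg at h1
    by_cases h2 : a + c < 2 * m
    · have e : (a + c) % m = a + c - m := by
        rw [Nat.mod_eq_sub_mod h1, Nat.mod_eq_of_lt (by omega)]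
      rw [e]
      zify [ha, hc, h1, (show a + c - m ≤ m by omega)]
      nlinarith [mul_nonneg (by omega : (0:ℤ) ≤ (m:ℤ) - a) (by omega : (0:ℤ) ≤ (m:ℤ) - c)]
    · have h3 : a = m := by omega
      have h4 : c = m := by omega
      rw [h3, h4]
      simp [Nat.add_mod]

lemma gm_le (m a : ℕ) (ha : a ≤ m) : (a % m) * (m - a % m) ≤ a * (m - a) := by
  rcases eq_or_lt_of_le ha with h | h
  · subst h; simp
  · rw [Nat.mod_eq_of_lt h]

lemma sumg {ι : Type*} (s : Finset ι) (m : ℕ) (hm : 0 < m) (f : ι → ℕ)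
    (hf : ∀ i ∈ s, f i ≤ m) :
    ((∑ i ∈ s, f i) % m) * (m - (∑ i ∈ s, f i) % m) ≤ ∑ i ∈ s, f i * (m - f i) := by
  classical
  induction s using Finset.induction_on with
  | empty => simp
  | @insert a s ha ih =>
    rw [Finset.sum_insert ha, Finset.sum_insert ha]
    have hfa : f a ≤ m := hf a (Finset.mem_insert_self a s)
    have ihs : ((∑ i ∈ s, f i) % m) * (m - (∑ i ∈ s, f i) % m) ≤ ∑ i ∈ s, f i * (m - f i) :=
      ih (fun i hi => hf i (Finset.mem_insert_of_mem hi))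
    have h1 : (f a + ∑ i ∈ s, f i) % m = (f a % m + (∑ i ∈ s, f i) % m) % m := Nat.add_mod _ _ _
    rw [h1]
    calc (f a % m + (∑ i ∈ s, f i) % m) % m * (m - (f a % m + (∑ i ∈ s, f i) % m) % m)
        ≤ (f a % m) * (m - f a % m) + ((∑ i ∈ s, f i) % m) * (m - (∑ i ∈ s, f i) % m) :=
          pairg m _ _ (Nat.le_of_lt (Nat.mod_lt _ hm)) (Nat.le_of_lt (Nat.mod_lt _ hm))
      _ ≤ f a * (m - f a) + ∑ i ∈ s, f i * (m - f i) :=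
          Nat.add_le_add (gm_le m (f a) hfa) ihs

lemma sum_pair {t : ℕ} (f : Fin t → Fin t → ℕ) :
    (∑ i, ∑ j, if i < j then f i j + f j i else 0) + ∑ i, f i i = ∑ i, ∑ j, f i j := by
  have key : ∀ i j : Fin t, f i j =
      (if i < j then f i j else 0) + ((if j < i then f i j else 0) + (if i = j then f i j else 0)) := by
    intro i j
    rcases lt_trichotomy i j with h | h | h
    · simp [h, asymm h, ne_of_lt h]
    · simp [h]
    · simp [asymm h, h, ne_of_gt h]
  have e0 : ∑ i, ∑ j, f i j
      = (∑ i, ∑ j, if i < j then f i j else 0)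
        + ((∑ i, ∑ j, if j < i then f i j else 0) + (∑ i, ∑ j, if i = j then f i j else 0)) := by
    simp only [← Finset.sum_add_distrib]
    exact Finset.sum_congr rfl fun i _ => Finset.sum_congr rfl fun j _ => key i j
  have e1 : (∑ i, ∑ j, if j < i then f i j else 0) = ∑ i, ∑ j, if i < j then f j i else 0 :=
    Finset.sum_comm
  have e2 : (∑ i : Fin t, ∑ j, if i = j then f i j else 0) = ∑ i, f i i := by
    apply Finset.sum_congr rfl
    intro i _
    simp
  have e3 : (∑ i, ∑ j, if i < j then f i j + f j i else 0)
      = (∑ i, ∑ j, if i < j then f i j else 0) + ∑ i, ∑ j, if i < j then f j i else 0 := by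
    simp only [← Finset.sum_add_distrib]
    apply Finset.sum_congr rfl; intro i _
    apply Finset.sum_congr rfl; intro j _
    split_ifs <;> simp
  rw [e3, e0, e1, e2]
  ring

lemma arith (p b k : ℕ) (hb : b < p) (hhalf : p < 2 * b) (hk : 1 ≤ k) :
    (p - 1) * (b + p * k) + 2 * ((p - b) * (p * k))
      ≤ (b + p * k) * (b + p * k)
        + ((b + p * k) % (p - 1)) * ((p - 1) - (b + p * k) % (p - 1)) := by
  have hp2 : 2 ≤ p := by omega
  rcases Nat.lt_or_ge k 2 with h2 | h2
  · obtain rfl : k = 1 := by omega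
    simp only [mul_one]
    rcases Nat.lt_or_ge (b + 1) (p - 1) with hA | hBC
    · -- b ≤ p - 3
      have hr : (b + p) % (p - 1) = b + 1 := by
        have e : b + p = (p - 1) + (b + 1) := by omega
        rw [e, Nat.add_mod_left, Nat.mod_eq_of_lt hA]
      rw [hr]
      zify [hA.le, (by omega : b ≤ p), (by omega : 1 ≤ p)]
      nlinarith [mul_nonneg (by omega : (0:ℤ) ≤ 2 * b - p - 1) (by omega : (0:ℤ) ≤ (p:ℤ)),
        (by omega : (0:ℤ) ≤ 2 * p - 1 - b)]
    · -- b ∈ {p-2, p-1}: drop the remainder term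
      apply le_trans _ (Nat.le_add_right _ _)
      have hbp : b = p - 2 ∨ b = p - 1 := by omega
      rcases hbp with rfl | rfl
      · have hp5 : 5 ≤ p := by omega
        zify [(by omega : 2 ≤ p), (by omega : 1 ≤ p), (by omega : p - 2 ≤ p)]
        nlinarith
      · zify [(by omega : 1 ≤ p), (by omega : p - 1 ≤ p)]
        nlinarith
  · -- k ≥ 2
    apply le_trans _ (Nat.le_add_right _ _)
    have hpk : 2 * p ≤ p * k := by
      calc 2 * p = p * 2 := by ring
        _ ≤ p * k := Nat.mul_le_mul_left p h2
    zify [(by omega : b ≤ p), (by omega : 1 ≤ p)]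
    have hpk' : (2:ℤ) * p ≤ (p:ℤ) * k := by exact_mod_cast hpk
    have hf1 : (0:ℤ) ≤ (b:ℤ) + p * k - (p - 1) - 2 * (p - b) := by omega
    nlinarith [mul_nonneg (by omega : (0:ℤ) ≤ (b:ℤ) + p * k) hf1,
      mul_nonneg (by omega : (0:ℤ) ≤ (p:ℤ) - b) (by omega : (0:ℤ) ≤ (b:ℤ))]

theorem stmt3 (n p t : ℕ) (hn : 0 < n) (hp : 0 < p) (ht : 0 < t)
    (x : Fin t → ℕ) (hx : ∀ i, 0 < x i) (hsum : n = ∑ i, x i)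
    (b : ℕ) (bb : Fin t → ℕ) (hb : b < p) (hbi : ∀ i, bb i < p)
    (hbn : b ≤ n) (hbx : ∀ i, bb i ≤ x i)
    (hmod : b ≡ (∑ i, bb i) [MOD p])
    (q : Fin t → ℕ) (hq : ∀ i, q i = (p - bb i) % p)
    (A : ℕ)
    (hA : A = (∑ i, ∑ j, if i < j then x i * x j else 0) + ∑ i, (x i - bb i) * q i)
    (hhalf : p < 2 * b) :
    (p - b) * (n - b) ≤ A := by
  classical
  have hb1 : 1 ≤ b := by omega
  have hp2 : 2 ≤ p := by omega
  set s : Fin t → ℕ := fun i => x i - bb i with hs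
  have hsi : ∀ i, x i - bb i = s i := fun i => rfl
  have hxs : ∀ i, x i = s i + bb i := by
    intro i
    have h1 := hbx i
    have h2 := hsi i
    omega
  set B := ∑ i, bb i with hBdef
  have hbB : b = B % p := by
    have h := hmod
    rw [Nat.ModEq, Nat.mod_eq_of_lt hb] at h
    exact h
  set k := B / p with hkdef
  have hBk : B = b + p * k := by
    have h := Nat.div_add_mod B p
    have h2 : p * k = p * (B / p) := by rw [hkdef]
    omega
  have hbiB : ∀ i, bb i ≤ B := fun i =>
    Finset.single_le_sum (fun j _ => Nat.zero_le _) (Finset.mem_univ i)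
  set S := ∑ i, s i with hSdef
  have hSn : S + B = n := by
    rw [hsum, hSdef, hBdef, ← Finset.sum_add_distrib]
    exact Finset.sum_congr rfl fun i _ => (hxs i).symm
  set c := p - b with hc
  have hq0 : ∀ i, bb i = 0 → q i = 0 := by
    intro i h
    rw [hq i, h, Nat.sub_zero, Nat.mod_self]
  have hqpos : ∀ i, 0 < bb i → q i = p - bb i := by
    intro i h
    rw [hq i]
    exact Nat.mod_eq_of_lt (by omega)
  have hKor : p * k = 0 ∨ p ≤ p * k := by
    rcases Nat.eq_zero_or_pos k with h | h
    · left; simp [h]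
    · right; exact Nat.le_mul_of_pos_right p h
  -- per-index coefficient bound
  have coef : ∀ i, c + bb i ≤ B + q i := by
    intro i
    have h1 := hbiB i
    have h2 := hbi i
    rcases Nat.eq_zero_or_pos (bb i) with h | h
    · rw [hq0 i h, h]
      omega
    · rw [hqpos i h]
      omega
  set X := ∑ i, ∑ j, if i < j then x i * x j else 0 with hX
  set P := ∑ i, ∑ j, if i < j then bb i * bb j else 0 with hP
  set Y := ∑ i, ∑ j, if i < j then s i * bb j + s j * bb i else 0 with hY
  set Q := ∑ i, s i * q i with hQ
  have hAXQ : A = X + Q := by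
    rw [hA, hX, hQ]
  have step1 : Y + P ≤ X := by
    rw [hY, hP, hX, ← Finset.sum_add_distrib]
    apply Finset.sum_le_sum
    intro i _
    rw [← Finset.sum_add_distrib]
    apply Finset.sum_le_sum
    intro j _
    split_ifs with h
    · rw [hxs i, hxs j]
      nlinarith [Nat.zero_le (s i * s j)]
    · simp
  have idY : Y + ∑ i, s i * bb i = S * B := by
    have h := sum_pair (fun i j => s i * bb j)
    rw [hY]
    rw [h]
    rw [hSdef, hBdef, Finset.sum_mul]
    exact Finset.sum_congr rfl fun i _ => (Finset.mul_sum _ _ _).symm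
  have idP : P + P + ∑ i, bb i * bb i = B * B := by
    have h := sum_pair (fun i j => bb i * bb j)
    have h2 : (∑ i : Fin t, ∑ j : Fin t, if i < j then bb i * bb j + bb j * bb i else 0)
        = P + P := by
      rw [hP, ← Finset.sum_add_distrib]
      apply Finset.sum_congr rfl; intro i _
      rw [← Finset.sum_add_distrib]
      apply Finset.sum_congr rfl; intro j _
      split_ifs <;> ring
    rw [← h2, h, hBdef, Finset.sum_mul]
    exact Finset.sum_congr rfl fun i _ => (Finset.mul_sum _ _ _).symm
  set m := p - 1 with hm
  have hm1 : 0 < m := by omega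
  have hbim : ∀ i, bb i ≤ m := fun i => by have := hbi i; omega
  set G := ∑ i, bb i * (m - bb i) with hG
  have idG : (∑ i, bb i * bb i) + G = m * B := by
    rw [hG, ← Finset.sum_add_distrib, hBdef, Finset.mul_sum]
    apply Finset.sum_congr rfl
    intro i _
    have h := hbim i
    rw [← Nat.mul_add, Nat.add_sub_cancel' h, Nat.mul_comm]
  have hGr : (B % m) * (m - B % m) ≤ G := by
    rw [hG, hBdef]
    exact sumg Finset.univ m hm1 bb (fun i _ => hbim i)
  have hPbound : c * (p * k) ≤ P := by
    rcases Nat.eq_zero_or_pos k with h | h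
    · simp [h]
    · have key := arith p b k hb hhalf h
      rw [← hBk, ← hm, ← hc] at key
      linarith [hGr, idP, idG]
  -- main linear combination
  have main : c * S + ∑ i, s i * bb i ≤ S * B + Q := by
    have e1 : c * S = ∑ i, c * s i := by rw [hSdef, Finset.mul_sum]
    have e2 : S * B = ∑ i, s i * B := by rw [hSdef, Finset.sum_mul]
    rw [e1, e2, hQ, ← Finset.sum_add_distrib, ← Finset.sum_add_distrib]
    apply Finset.sum_le_sum
    intro i _
    calc c * s i + s i * bb i = s i * (c + bb i) := by ring
      _ ≤ s i * (B + q i) := Nat.mul_le_mul_left _ (coef i)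
      _ = s i * B + s i * q i := by ring
  have hcS : c * S ≤ Y + Q := by linarith [idY, main]
  have hnb : n - b = S + p * k := by omega
  rw [hAXQ, hnb, Nat.mul_add]
  linarith [step1, hcS, hPbound]
end

section
/- Given positive real numbers x₁, …, x_t and a positive integer S with S ≤ x₁ + ⋯ + x_t, and any non-negative reals a₁, …, a_t, there exist non-negative integers y₁, …, y_t satisfying: (i) 0 ≤ y_i ≤ ⌈x_i⌉ for each i; (ii) ∑_{i=1}^t y_i = S; and (iii) ∑_{i=1}^t a_i y_i ≤ ∑_{i=1}^t a_i x_i. -/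
open Finset

/-- Either all of `S` fits on the lightest coordinate `j`, or `j` is rounded up to `⌈x j⌉₊`
and the rest is handled recursively with the weights `a - a j`, which stay nonnegative;
the term `a j * (∑ x - S)` produced by this shift pays for the rounding up at `j`. -/
theorem exists_nat_le_ceil_sum_eq_weighted_sum_le {ι : Type*} [DecidableEq ι] (s : Finset ι)
    {x a : ι → ℝ} (hx : ∀ i ∈ s, 0 ≤ x i) (ha : ∀ i ∈ s, 0 ≤ a i) {S : ℕ}
    (hS : (S : ℝ) ≤ ∑ i ∈ s, x i) :
    ∃ y : ι → ℕ, (∀ i ∈ s, y i ≤ ⌈x i⌉₊) ∧ ∑ i ∈ s, y i = S ∧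
      ∑ i ∈ s, a i * y i ≤ ∑ i ∈ s, a i * x i := by
  induction s using Finset.strongInduction generalizing a S with
  | H s ih =>
  obtain rfl | hne := s.eq_empty_or_nonempty
  · exact ⟨0, by simp, by simpa [eq_comm] using hS, by simp⟩
  obtain ⟨j, hj, hmin⟩ := s.exists_min_image a hne
  have haS : a j * S ≤ a j * ∑ i ∈ s, x i := mul_le_mul_of_nonneg_left hS (ha j hj)
  by_cases hc : S ≤ ⌈x j⌉₊
  · refine ⟨Pi.single j S, fun i _ => ?_, by simp [hj], ?_⟩
    · rcases eq_or_ne i j with rfl | hij <;> simp [*]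
    calc ∑ i ∈ s, a i * ((Pi.single j S : ι → ℕ) i : ℝ) = a j * S := by
          simp [Pi.single_apply, hj]
      _ ≤ ∑ i ∈ s, a j * x i := by rwa [← mul_sum]
      _ ≤ ∑ i ∈ s, a i * x i :=
        sum_le_sum fun i hi => mul_le_mul_of_nonneg_right (hmin i hi) (hx i hi)
  obtain ⟨S', rfl⟩ := Nat.exists_eq_add_of_le (not_le.mp hc).le
  have hsplit (f : ι → ℝ) := (add_sum_erase s f hj).symm
  have hS' : (S' : ℝ) ≤ ∑ i ∈ s.erase j, x i := by
    have := Nat.le_ceil (x j)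
    push_cast at hS
    linarith [hsplit x]
  obtain ⟨y, hy, hsum, hweight⟩ := ih (s.erase j) (erase_ssubset hj)
    (fun i hi => hx i (mem_of_mem_erase hi)) (a := fun i => a i - a j)
    (fun i hi => sub_nonneg.mpr (hmin i (mem_of_mem_erase hi))) hS'
  have hrest : ∀ i ∈ s.erase j, Function.update y j ⌈x j⌉₊ i = y i :=
    fun i hi => Function.update_of_ne (ne_of_mem_erase hi) _ _
  refine ⟨Function.update y j ⌈x j⌉₊, fun i hi => ?_, ?_, ?_⟩
  · rcases eq_or_ne i j with rfl | hij
    · simp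
    · simpa [hij] using hy i (mem_erase.mpr ⟨hij, hi⟩)
  · rw [sum_update_of_mem hj, sdiff_singleton_eq_erase, hsum]
  · have hsum' : ∑ i ∈ s.erase j, (y i : ℝ) = S' := by exact_mod_cast hsum
    simp only [sub_mul, sum_sub_distrib, ← mul_sum, hsum'] at hweight
    rw [hsplit, hsplit (fun i => a i * x i), Function.update_self,
      sum_congr rfl fun i hi => by rw [hrest i hi]]
    push_cast at haS
    rw [hsplit x] at haS
    linarith

theorem stmt4_general (t : ℕ) (x : Fin t → ℝ) (hx : ∀ i, 0 < x i)
    (S : ℕ) (hSle : (S : ℝ) ≤ ∑ i, x i)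
    (a : Fin t → ℝ) (ha : ∀ i, 0 ≤ a i) :
    ∃ y : Fin t → ℕ, (∀ i, y i ≤ ⌈x i⌉₊) ∧ (∑ i, y i) = S ∧
      (∑ i, a i * (y i : ℝ)) ≤ ∑ i, a i * x i := by
  obtain ⟨y, hy, hsum, hweight⟩ :=
    exists_nat_le_ceil_sum_eq_weighted_sum_le univ (fun i _ => (hx i).le) (fun i _ => ha i) hSle
  exact ⟨y, fun i => hy i (mem_univ i), hsum, hweight⟩

theorem stmt4 (t : ℕ) (x : Fin t → ℝ) (hx : ∀ i, 0 < x i)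
    (S : ℕ) (hS : 0 < S) (hSle : (S : ℝ) ≤ ∑ i, x i)
    (a : Fin t → ℝ) (ha : ∀ i, 0 ≤ a i) :
    ∃ y : Fin t → ℕ, (∀ i, y i ≤ ⌈x i⌉₊) ∧ (∑ i, y i) = S ∧
      (∑ i, a i * (y i : ℝ)) ≤ ∑ i, a i * x i :=
  stmt4_general t x hx S hSle a ha
end

section
/- Let G = (V, E) be a complete graph where each edge (u,v) carries weights w⁺(u,v), w⁻(u,v) ≥ 0 with w⁺(u,v) + w⁻(u,v) = 1. With cost and dist defined as for weighted correlation clustering, for any two clusterings ℳ and 𝒦 of V: dist(ℳ, 𝒦) ≤ cost(ℳ) + cost(𝒦). -/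
/-- The weighted correlation clustering cost of a clustering `c` (vertices `u,v`
are in the same part iff `c u = c v`): sum over unordered pairs of distinct
vertices (represented as pairs `u < v`) of `w⁻` for pairs clustered together
and `w⁺` for pairs separated. -/
def costW {V : Type*} [Fintype V] [LinearOrder V]
    (wp wm : V → V → ℝ) (c : V → ℕ) : ℝ :=
  ∑ u : V, ∑ v ∈ Finset.univ.filter (fun v => u < v),
    (if c u = c v then wm u v else wp u v)

/-- The disagreement distance between two clusterings: the number of unordered
pairs of distinct vertices that are together in one clustering and separated in
the other. -/
def distC {V : Type*} [Fintype V] [LinearOrder V] (c d : V → ℕ) : ℝ :=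
  ((Finset.univ.filter
      (fun uv : V × V => uv.1 < uv.2 ∧ ¬((c uv.1 = c uv.2) ↔ (d uv.1 = d uv.2)))).card : ℝ)

theorem stmt7 {V : Type*} [Fintype V] [LinearOrder V]
    (wp wm : V → V → ℝ)
    (hwp : ∀ u v, 0 ≤ wp u v) (hwm : ∀ u v, 0 ≤ wm u v)
    (hprob : ∀ u v, wp u v + wm u v = 1)
    (M K : V → ℕ) :
    distC M K ≤ costW wp wm M + costW wp wm K := by
  have hd : distC M K = ∑ u : V, ∑ v ∈ Finset.univ.filter (fun v => u < v),
      (if ¬((M u = M v) ↔ (K u = K v)) then (1:ℝ) else 0) := by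
    rw [distC, Finset.card_filter]
    push_cast
    rw [Fintype.sum_prod_type]
    congr 1
    ext u
    rw [Finset.sum_filter]
    congr 1
    ext v
    by_cases h1 : u < v <;> by_cases h2 : ¬((M u = M v) ↔ (K u = K v)) <;>
      simp [h1, h2]
  rw [hd, costW, costW, ← Finset.sum_add_distrib]
  apply Finset.sum_le_sum
  intro u _
  rw [← Finset.sum_add_distrib]
  apply Finset.sum_le_sum
  intro v _
  by_cases h : (M u = M v) ↔ (K u = K v)
  · simp only [h, not_true, if_false]
    have := hwm u v; have := hwp u v
    split_ifs <;> linarith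
  · simp only [h, not_false_iff, if_true]
    rcases Classical.em (M u = M v) with h1 | h1
    · have h2 : ¬ K u = K v := fun hk => h (iff_of_true h1 hk)
      simp [h1, h2]
      linarith [hprob u v]
    · have h2 : K u = K v := by
        by_contra h2
        exact h (iff_of_false h1 h2)
      simp [h1, h2]
      linarith [hprob u v]
end

section
/- Let dist be a metric on the set of clusterings of a vertex set V, let 𝒞₁, …, 𝒞_m be input clusterings, and let 𝓕* be a fair clustering minimizing the objective (∑_{i=1}^m dist(𝒞_i, ·)^ℓ)^{1/ℓ} over fair clusterings, for a fixed integer ℓ ≥ 1. Suppose 𝒞_{i*} is a closest input clustering to 𝓕*, and 𝓕_{i*} is a fair clustering satisfying dist(𝒞_{i*}, 𝓕_{i*}) ≤ α·dist(𝒞_{i*}, 𝓕*) for some α ≥ 1. Then (∑_{j=1}^m dist(𝒞_j, 𝓕_{i*})^ℓ)^{1/ℓ} ≤ (α + 2)·(∑_{j=1}^m dist(𝒞_j, 𝓕*)^ℓ)^{1/ℓ}. -/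
theorem stmt9 {X : Type*} (dist : X → X → ℝ)
    (hnn : ∀ a b, 0 ≤ dist a b)
    (hsymm : ∀ a b, dist a b = dist b a)
    (htri : ∀ a b c, dist a c ≤ dist a b + dist b c)
    (m : ℕ) (hm : 1 ≤ m) (C : Fin m → X)
    (fair : X → Prop) (Fstar Fist : X) (istar : Fin m)
    (ℓ : ℕ) (hℓ : 1 ≤ ℓ) (α : ℝ) (hα : 1 ≤ α)
    (hFstar_fair : fair Fstar)
    (hFstar_opt : ∀ F, fair F →
      (∑ j, dist (C j) Fstar ^ ℓ) ^ (1 / (ℓ : ℝ))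
        ≤ (∑ j, dist (C j) F ^ ℓ) ^ (1 / (ℓ : ℝ)))
    (hFist_fair : fair Fist)
    (hclosest : ∀ j, dist (C istar) Fstar ≤ dist (C j) Fstar)
    (hαclose : dist (C istar) Fist ≤ α * dist (C istar) Fstar) :
    (∑ j, dist (C j) Fist ^ ℓ) ^ (1 / (ℓ : ℝ))
      ≤ (α + 2) * (∑ j, dist (C j) Fstar ^ ℓ) ^ (1 / (ℓ : ℝ)) := by
  have hα2 : (0:ℝ) ≤ α + 2 := by linarith
  -- pointwise bound
  have hpt : ∀ j, dist (C j) Fist ≤ (α + 2) * dist (C j) Fstar := by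
    intro j
    have h1 : dist (C j) Fist ≤ dist (C j) Fstar + dist Fstar Fist := htri _ _ _
    have h2 : dist Fstar Fist ≤ dist Fstar (C istar) + dist (C istar) Fist := htri _ _ _
    have h3 : dist Fstar (C istar) = dist (C istar) Fstar := hsymm _ _
    have h4 := hclosest j
    have h5 : dist (C istar) Fist ≤ α * dist (C istar) Fstar := hαclose
    have h6 : α * dist (C istar) Fstar ≤ α * dist (C j) Fstar :=
      mul_le_mul_of_nonneg_left h4 (by linarith)
    nlinarith
  have hS : (0:ℝ) ≤ ∑ j, dist (C j) Fstar ^ ℓ :=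
    Finset.sum_nonneg fun j _ => pow_nonneg (hnn _ _) _
  have hT : (0:ℝ) ≤ ∑ j, dist (C j) Fist ^ ℓ :=
    Finset.sum_nonneg fun j _ => pow_nonneg (hnn _ _) _
  have hsum : (∑ j, dist (C j) Fist ^ ℓ) ≤ (α + 2) ^ ℓ * ∑ j, dist (C j) Fstar ^ ℓ := by
    rw [Finset.mul_sum]
    refine Finset.sum_le_sum fun j _ => ?_
    calc dist (C j) Fist ^ ℓ ≤ ((α + 2) * dist (C j) Fstar) ^ ℓ :=
          pow_le_pow_left₀ (hnn _ _) (hpt j) ℓ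
      _ = (α + 2) ^ ℓ * dist (C j) Fstar ^ ℓ := mul_pow _ _ _
  have hℓ0 : (ℓ:ℝ) ≠ 0 := Nat.cast_ne_zero.mpr (by omega)
  have hrp : ((α + 2) ^ ℓ * ∑ j, dist (C j) Fstar ^ ℓ) ^ (1 / (ℓ:ℝ))
      = (α + 2) * (∑ j, dist (C j) Fstar ^ ℓ) ^ (1 / (ℓ:ℝ)) := by
    rw [Real.mul_rpow (pow_nonneg hα2 _) hS, ← Real.rpow_natCast (α + 2) ℓ,
      ← Real.rpow_mul hα2, mul_one_div, div_self hℓ0, Real.rpow_one]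
  calc (∑ j, dist (C j) Fist ^ ℓ) ^ (1 / (ℓ:ℝ))
      ≤ ((α + 2) ^ ℓ * ∑ j, dist (C j) Fstar ^ ℓ) ^ (1 / (ℓ:ℝ)) :=
        Real.rpow_le_rpow hT hsum (by positivity)
    _ = _ := hrp
end

section
/- Let AVG, OPT = m·AVG be non-negative reals, m a positive integer, and 0 < β < 1. Suppose a₁ ≤ a₂ ≤ ⋯ ≤ a_m are non-negative reals summing to OPT, and let t < m/g ≤ t + 1 for a real g > 1 be such that a_i ≤ (1 − β)AVG for i ≤ t and a_i > (1 − β)AVG for i > t. Then for any index h with t < h ≤ m/s, where 1 < s < g, it holds that a_h ≤ (1 + (β(g − s) + s)/(g(s − 1)))·AVG. -/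
/-!
The items `a 1, …, a t` are nonnegative, the items strictly between `t` and `h` exceed `(1 - β) AVG`,
and the `m - h + 1` items from `h` on are at least `a h`, so
`m AVG ≥ (h - t - 1)(1 - β) AVG + (m - h + 1) a h`. Solving for `a h` and using `h s ≤ m` and
`t g < m` to compare the resulting ratio with the claimed factor is then pure algebra.
-/

open Finset

noncomputable def loadFactor (β g s : ℝ) : ℝ := 1 + (β * (g - s) + s) / (g * (s - 1))

theorem le_sum_Icc_of_monotone {a : ℕ → ℝ} {c : ℝ} {t h m : ℕ} (hnn : ∀ i, 0 ≤ a i)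
    (hmono : Monotone a) (hc : ∀ i, t < i → i < h → c ≤ a i) (hth : t < h) (hhm : h ≤ m) :
    ((h : ℝ) - 1 - t) * c + ((m : ℝ) - h + 1) * a h ≤ ∑ i ∈ Icc 1 m, a i := by
  have hsplit : ∑ i ∈ Icc 1 m, a i =
      ∑ i ∈ Ioc 0 t, a i + ∑ i ∈ Ioc t (h - 1), a i + ∑ i ∈ Ioc (h - 1) m, a i := by
    rw [sum_Ioc_consecutive _ (Nat.zero_le t) (by omega),
      sum_Ioc_consecutive _ (by omega) (by omega)]
    rfl
  have hhead : 0 ≤ ∑ i ∈ Ioc 0 t, a i := sum_nonneg fun i _ => hnn i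
  have hmiddle : ((h - 1 - t : ℕ) : ℝ) * c ≤ ∑ i ∈ Ioc t (h - 1), a i := by
    simpa [Nat.card_Ioc] using card_nsmul_le_sum (Ioc t (h - 1)) a c fun i hi => by
      rw [mem_Ioc] at hi
      exact hc i hi.1 (by omega)
  have htail : ((m - (h - 1) : ℕ) : ℝ) * a h ≤ ∑ i ∈ Ioc (h - 1) m, a i := by
    simpa [Nat.card_Ioc] using card_nsmul_le_sum (Ioc (h - 1) m) a (a h) fun i hi => by
      rw [mem_Ioc] at hi
      exact hmono (by omega)
  rw [Nat.sub_sub, Nat.cast_sub (by omega)] at hmiddle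
  rw [Nat.cast_sub (by omega), Nat.cast_sub (by omega)] at htail
  push_cast at hmiddle htail
  linarith

/-- After clearing the denominator `g (s - 1)`, the difference of the two sides is a nonnegative
constant plus nonnegative multiples of `m - h s` and `m - t g`. -/
theorem sub_mul_one_sub_le_mul_loadFactor {m h t β g s : ℝ} (hβ0 : 0 ≤ β) (hβ1 : β ≤ 1)
    (hs : 1 < s) (hsg : s ≤ g) (hhs : h * s ≤ m) (htg : t * g ≤ m) :
    m - (h - 1 - t) * (1 - β) ≤ (m - h + 1) * loadFactor β g s := by
  have hs1 : 0 < s - 1 := by linarith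
  have hD : 0 < g * (s - 1) := mul_pos (by linarith) hs1
  have hF : loadFactor β g s * (g * (s - 1)) = g * (s - 1) + (β * (g - s) + s) := by
    rw [loadFactor, add_mul, div_mul_cancel₀ _ hD.ne', one_mul]
  have hid : (m - h + 1) * loadFactor β g s * (g * (s - 1))
      - (m - (h - 1 - t) * (1 - β)) * (g * (s - 1))
      = β * g * (s - 1) + (β * (g - s) + s) + (β * (g - 1) + 1) * (m - h * s)
        + (1 - β) * (s - 1) * (m - t * g) := by
    rw [mul_assoc, hF]
    ring
  refine le_of_mul_le_mul_right (sub_nonneg.mp ?_) hD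
  rw [hid]
  refine add_nonneg (add_nonneg (add_nonneg ?_ ?_) ?_) ?_
  · exact mul_nonneg (mul_nonneg hβ0 (by linarith)) hs1.le
  · linarith [mul_nonneg hβ0 (sub_nonneg.mpr hsg)]
  · have : 0 ≤ β * (g - 1) := mul_nonneg hβ0 (by linarith)
    exact mul_nonneg (by linarith) (sub_nonneg.mpr hhs)
  · exact mul_nonneg (mul_nonneg (sub_nonneg.mpr hβ1) hs1.le) (sub_nonneg.mpr htg)

theorem stmt13_general (m : ℕ) (AVG OPT : ℝ) (hAVG : 0 ≤ AVG)
    (hOPT : OPT = m * AVG) (β g s : ℝ) (hβ0 : 0 < β) (hβ1 : β < 1)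
    (hs : 1 < s) (hsg : s < g)
    (a : ℕ → ℝ) (hnn : ∀ i, 0 ≤ a i) (hmono : ∀ i j, i ≤ j → a i ≤ a j)
    (hsum : ∑ i ∈ Finset.Icc 1 m, a i = OPT)
    (t : ℕ) (ht1 : (t : ℝ) < m / g)
    (hbig : ∀ i, t < i → i ≤ m → (1 - β) * AVG < a i)
    (h : ℕ) (hh1 : t < h) (hh2 : (h : ℝ) ≤ m / s) :
    a h ≤ (1 + (β * (g - s) + s) / (g * (s - 1))) * AVG := by
  have hhs : (h : ℝ) * s ≤ m := (le_div_iff₀ (by linarith)).mp hh2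
  have htg : (t : ℝ) * g ≤ m := ((lt_div_iff₀ (by linarith)).mp ht1).le
  have hhm : h ≤ m := by
    exact_mod_cast (le_mul_of_one_le_right (Nat.cast_nonneg h) hs.le).trans hhs
  have hmass := le_sum_Icc_of_monotone hnn (fun i j hij => hmono i j hij)
    (fun i hti hih => (hbig i hti (by omega)).le) hh1 hhm
  have hbudget := sub_mul_one_sub_le_mul_loadFactor hβ0.le hβ1.le hs hsg.le hhs htg
  have hcount : (0 : ℝ) < m - h + 1 := by
    have : (h : ℝ) ≤ m := by exact_mod_cast hhm
    linarith
  refine le_of_mul_le_mul_left ?_ hcount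
  calc ((m : ℝ) - h + 1) * a h ≤ (m - (h - 1 - t) * (1 - β)) * AVG := by linarith
    _ ≤ (m - h + 1) * loadFactor β g s * AVG := mul_le_mul_of_nonneg_right hbudget hAVG
    _ = _ := by rw [loadFactor, mul_assoc]

theorem stmt13 (m : ℕ) (hm : 1 ≤ m) (AVG OPT : ℝ) (hAVG : 0 ≤ AVG)
    (hOPT : OPT = m * AVG) (β g s : ℝ) (hβ0 : 0 < β) (hβ1 : β < 1)
    (hs : 1 < s) (hsg : s < g)
    (a : ℕ → ℝ) (hnn : ∀ i, 0 ≤ a i) (hmono : ∀ i j, i ≤ j → a i ≤ a j)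
    (hsum : ∑ i ∈ Finset.Icc 1 m, a i = OPT)
    (t : ℕ) (ht1 : (t : ℝ) < m / g) (ht2 : (m : ℝ) / g ≤ t + 1)
    (hsmall : ∀ i, 1 ≤ i → i ≤ t → a i ≤ (1 - β) * AVG)
    (hbig : ∀ i, t < i → i ≤ m → (1 - β) * AVG < a i)
    (h : ℕ) (hh1 : t < h) (hh2 : (h : ℝ) ≤ m / s) :
    a h ≤ (1 + (β * (g - s) + s) / (g * (s - 1))) * AVG :=
  stmt13_general m AVG OPT hAVG hOPT β g s hβ0 hβ1 hs hsg a hnn hmono hsum t ht1 hbig h hh1 hh2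
end
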